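/- If φ is holomorphic near 𝔻̄ and injective on 𝔻, and z₀ ∈ ∂𝔻 satisfies φ'(z₀) = 0, then φ''(z₀) ≠ 0; i.e. every zero of φ' on the boundary circle is simple. -/

import Mathlib

open Metric

/-!
Write `φ - φ z₀ = ψ ^ m` near `z₀`, where `m` is the order of `φ - φ z₀` at `z₀` (finite, since
`φ` is injective on the disc) and `ψ` is conformal at `z₀` with `ψ z₀ = 0`. If `φ'` and `φ''`
vanished at `z₀` we would have `m ≥ 3`. Seen through `ψ`, the disc near the boundary point `z₀`
fills out a half-plane up to `o(|w|)`, and a half-plane contains two points `w` and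
`e^{2πi/m} w` because its opening angle `π` exceeds `2π/m`. Their `ψ`-preimages are distinct
points of the disc with the same value of `φ`.
-/

open Complex Filter Set
open scoped Topology Real InnerProductSpace

theorem eventually_norm_lt_of_hasDerivAt_of_inner_neg {F : Type*} [NormedAddCommGroup F]
    [InnerProductSpace ℝ F] {γ : ℝ → F} {v : F} {x : ℝ} (hγ : HasDerivAt γ v x)
    (hv : ⟪γ x, v⟫_ℝ < 0) : ∀ᶠ t in 𝓝[>] x, ‖γ t‖ < ‖γ x‖ := by
  have hslope : ∀ᶠ t in 𝓝[>] x, slope (‖γ ·‖ ^ 2) x t < 0 :=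
    nhdsGT_le_nhdsNE x <| (hasDerivAt_iff_tendsto_slope.mp hγ.norm_sq).eventually
      (eventually_lt_nhds (by linarith))
  filter_upwards [hslope, self_mem_nhdsWithin] with t ht (hxt : x < t)
  rw [slope_def_field, div_neg_iff] at ht
  refine lt_of_pow_lt_pow_left₀ 2 (norm_nonneg _) ?_
  rcases ht with ⟨-, ht⟩ | ⟨ht, -⟩ <;> linarith

theorem exists_re_neg_and_re_exp_mul_neg {m : ℕ} (hm : 3 ≤ m) :
    ∃ ν : ℂ, ν.re < 0 ∧ (exp (2 * π * I / m) * ν).re < 0 := by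
  have hcos : 0 < Real.cos (π / m) := by
    have hm' : (3 : ℝ) ≤ m := by exact_mod_cast hm
    have hpos : 0 < π / m := div_pos Real.pi_pos (by linarith)
    refine Real.cos_pos_of_mem_Ioo ⟨by linarith [Real.pi_pos], ?_⟩
    rw [div_lt_div_iff₀ (by linarith) two_pos]
    nlinarith [Real.pi_pos]
  refine ⟨-exp ((-(π / m) : ℝ) * I), ?_, ?_⟩
  · rw [neg_re, exp_ofReal_mul_I_re, Real.cos_neg]
    linarith
  · have : exp (2 * π * I / m) * -exp ((-(π / m) : ℝ) * I) = -exp ((π / m : ℝ) * I) := by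
      rw [mul_neg, ← exp_add]
      congr 2
      have : (m : ℂ) ≠ 0 := by exact_mod_cast (by omega : m ≠ 0)
      push_cast
      field_simp
      ring
    rw [this, neg_re, exp_ofReal_mul_I_re]
    linarith

theorem AnalyticAt.exists_eventuallyEq_pow {g : ℂ → ℂ} {z₀ : ℂ} (hg : AnalyticAt ℂ g z₀)
    (hg₀ : g z₀ ≠ 0) {n : ℕ} (hn : n ≠ 0) :
    ∃ h : ℂ → ℂ, AnalyticAt ℂ h z₀ ∧ (h · ^ n) =ᶠ[𝓝 z₀] g := by
  obtain ⟨c, hc⟩ := IsAlgClosed.exists_pow_nat_eq (g z₀) (Nat.pos_of_ne_zero hn)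
  have hlog : AnalyticAt ℂ (fun z => Complex.log (g z / g z₀)) z₀ :=
    (analyticAt_clog (by simp [hg₀])).comp (hg.div analyticAt_const hg₀)
  refine ⟨fun z => c * exp (Complex.log (g z / g z₀) / n), by fun_prop, ?_⟩
  filter_upwards [hg.continuousAt.eventually_ne hg₀] with z hz
  have hn' : (n : ℂ) ≠ 0 := Nat.cast_ne_zero.mpr hn
  rw [mul_pow, ← exp_nat_mul, mul_div_cancel₀ _ hn', exp_log (div_ne_zero hz hg₀), hc,
    mul_div_cancel₀ _ hg₀]

theorem AnalyticAt.exists_eventuallyEq_pow_of_analyticOrderAt_eq {f : ℂ → ℂ} {z₀ : ℂ} {m : ℕ}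
    (hf : AnalyticAt ℂ f z₀) (hm : analyticOrderAt f z₀ = m) (hm₀ : m ≠ 0) :
    ∃ ψ : ℂ → ℂ, ∃ u ≠ 0, HasStrictDerivAt ψ u z₀ ∧ ψ z₀ = 0 ∧ (ψ · ^ m) =ᶠ[𝓝 z₀] f := by
  obtain ⟨g, hg, hg₀, hfg⟩ := (hf.analyticOrderAt_eq_natCast).mp hm
  obtain ⟨h, hh, hhg⟩ := hg.exists_eventuallyEq_pow hg₀ hm₀
  have hh₀ : h z₀ ≠ 0 := by
    intro h0
    rw [← hhg.eq_of_nhds, h0, zero_pow hm₀] at hg₀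
    exact hg₀ rfl
  refine ⟨fun z => (z - z₀) * h z, h z₀, hh₀, ?_, by simp, ?_⟩
  · simpa using
      HasStrictDerivAt.fun_mul ((hasStrictDerivAt_id z₀).sub_const z₀) hh.hasStrictDerivAt
  · filter_upwards [hfg, hhg] with z hfz hhz
    rw [hfz, mul_pow, hhz, smul_eq_mul]

theorem HasStrictDerivAt.eventually_exists_mem_inter_ball_eq {ψ : ℂ → ℂ} {u z₀ : ℂ}
    (hψ : HasStrictDerivAt ψ u z₀) (hu : u ≠ 0) (hψ₀ : ψ z₀ = 0) (hz₀ : ‖z₀‖ = 1)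
    {s : Set ℂ} (hs : s ∈ 𝓝 z₀) {ν : ℂ} (hν : ν.re < 0) :
    ∀ᶠ t : ℝ in 𝓝[>] 0, ∃ z ∈ s ∩ ball 0 1, ψ z = t * (u * z₀ * ν) := by
  set q := hψ.localInverse ψ u z₀ hu
  have hq : HasStrictDerivAt q u⁻¹ 0 := hψ₀ ▸ hψ.to_localInverse hu
  have hq₀ : q 0 = z₀ := hψ₀ ▸ (hψ.hasStrictFDerivAt_equiv hu).localInverse_apply_image
  have hψq : ∀ᶠ w in 𝓝 0, ψ (q w) = w :=
    hψ₀ ▸ (hψ.hasStrictFDerivAt_equiv hu).eventually_right_inverse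
  -- `t ↦ q (t * w)` leaves `z₀` with velocity `u⁻¹ * w = z₀ * ν`, which points into the disc.
  set w := u * z₀ * ν
  have hγ : HasDerivAt (fun t : ℝ => q (t * w)) (u⁻¹ * w) 0 := by
    have hq' : HasDerivAt q u⁻¹ ((0 : ℝ) * w) := by simpa using hq.hasDerivAt
    exact (hq'.comp ((0 : ℝ) : ℂ) (hasDerivAt_mul_const w)).comp_ofReal
  have hinward : ⟪q ((0 : ℝ) * w), u⁻¹ * w⟫_ℝ < 0 := by
    have hz₀' : normSq z₀ = 1 := by simp [normSq_eq_norm_sq, hz₀]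
    have : u⁻¹ * w * (starRingEnd ℂ) z₀ = ν := by
      rw [show u⁻¹ * w * (starRingEnd ℂ) z₀ = u⁻¹ * u * (z₀ * (starRingEnd ℂ) z₀) * ν by ring,
        inv_mul_cancel₀ hu, mul_conj, hz₀']
      simp
    simpa [Complex.inner, hq₀, this] using hν
  have hw : Tendsto (fun t : ℝ => (t : ℂ) * w) (𝓝[>] 0) (𝓝 0) := by
    have hcont : Continuous (fun t : ℝ => (t : ℂ) * w) := by fun_prop
    exact (hcont.tendsto' 0 0 (by simp)).mono_left nhdsWithin_le_nhds
  have hqs : ∀ᶠ w' in 𝓝 0, q w' ∈ s :=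
    hq.hasDerivAt.continuousAt.preimage_mem_nhds (hq₀ ▸ hs)
  filter_upwards [eventually_norm_lt_of_hasDerivAt_of_inner_neg hγ hinward,
    hw.eventually hψq, hw.eventually hqs] with t hball hψt hst
  refine ⟨q (t * w), ⟨hst, ?_⟩, hψt⟩
  simpa [hq₀, hz₀] using hball

theorem not_injOn_pow_inter_ball {ψ : ℂ → ℂ} {u z₀ : ℂ} {m : ℕ}
    (hψ : HasStrictDerivAt ψ u z₀) (hu : u ≠ 0) (hψ₀ : ψ z₀ = 0) (hz₀ : ‖z₀‖ = 1) (hm : 3 ≤ m)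
    {s : Set ℂ} (hs : s ∈ 𝓝 z₀) : ¬ InjOn (ψ · ^ m) (s ∩ ball 0 1) := by
  intro hinj
  obtain ⟨ν, hν, hζν⟩ := exists_re_neg_and_re_exp_mul_neg hm
  set ζ := exp (2 * π * I / m)
  have hζ : IsPrimitiveRoot ζ m := isPrimitiveRoot_exp m (by omega)
  obtain ⟨t, ⟨z₁, hz₁, hψz₁⟩, ⟨z₂, hz₂, hψz₂⟩, ht⟩ :=
    ((hψ.eventually_exists_mem_inter_ball_eq hu hψ₀ hz₀ hs hν).and
      ((hψ.eventually_exists_mem_inter_ball_eq hu hψ₀ hz₀ hs hζν).and self_mem_nhdsWithin)).exists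
  have hψz₁₀ : ψ z₁ ≠ 0 := by
    have hν₀ : ν ≠ 0 := by rintro rfl; simp at hν
    have hz₀₀ : z₀ ≠ 0 := by rintro rfl; simp at hz₀
    have ht₀ : (t : ℂ) ≠ 0 := by exact_mod_cast (ne_of_gt ht)
    rw [hψz₁]
    exact mul_ne_zero ht₀ (mul_ne_zero (mul_ne_zero hu hz₀₀) hν₀)
  have hψz : ψ z₂ = ζ * ψ z₁ := by rw [hψz₁, hψz₂]; ring
  have h12 : z₁ = z₂ := hinj hz₁ hz₂ (by simp only [hψz, mul_pow, hζ.pow_eq_one, one_mul])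
  rw [← h12] at hψz
  exact hζ.ne_one (by omega) ((mul_eq_right₀ hψz₁₀).mp hψz.symm)

theorem analyticOrderAt_sub_ne_top_of_injOn {𝕜 E : Type*} [NontriviallyNormedField 𝕜]
    [NormedAddCommGroup E] [NormedSpace 𝕜 E] {f : 𝕜 → E} {U : Set 𝕜} {z₀ : 𝕜}
    (hU : IsOpen U) (hz₀ : z₀ ∈ closure U) (hf : InjOn f U) :
    analyticOrderAt (f · - f z₀) z₀ ≠ ⊤ := by
  intro htop
  set S := interior {z | f z = f z₀}
  have hS : S ∈ 𝓝 z₀ := interior_mem_nhds.mpr <|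
    (analyticOrderAt_eq_top.mp htop).mono fun z hz => sub_eq_zero.mp hz
  obtain ⟨x, hx⟩ := mem_closure_iff.mp hz₀ S isOpen_interior (mem_of_mem_nhds hS)
  obtain ⟨a, ha, b, hb, hab⟩ :=
    (infinite_of_mem_nhds x ((isOpen_interior.inter hU).mem_nhds hx)).nontrivial
  have hconst : ∀ z ∈ S, f z = f z₀ := fun z hz =>
    (interior_subset hz : z ∈ {z | f z = f z₀})
  exact hab (hf ha.2 hb.2 ((hconst a ha.1).trans (hconst b hb.1).symm))

theorem analyticOrderAt_sub_le_two_of_injOn_ball {f : ℂ → ℂ} {z₀ : ℂ} (hf : AnalyticAt ℂ f z₀)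
    (hz₀ : ‖z₀‖ = 1) (hinj : InjOn f (ball 0 1)) : analyticOrderAt (f · - f z₀) z₀ ≤ 2 := by
  by_contra! h
  obtain ⟨m, hm⟩ := ENat.ne_top_iff_exists.mp <|
    analyticOrderAt_sub_ne_top_of_injOn (z₀ := z₀) isOpen_ball
      (by simp [closure_ball _ one_ne_zero, hz₀]) hinj
  have h3 : 3 ≤ m := by exact_mod_cast (Order.add_one_le_of_lt (hm ▸ h) : (2 : ℕ∞) + 1 ≤ m)
  obtain ⟨ψ, u, hu, hψ, hψ₀, hψf⟩ :=
    (hf.fun_sub analyticAt_const).exists_eventuallyEq_pow_of_analyticOrderAt_eq hm.symm (by omega)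
  refine not_injOn_pow_inter_ball hψ hu hψ₀ hz₀ h3 hψf fun a ha b hb hab => hinj ha.2 hb.2 ?_
  have ha' : ψ a ^ m = f a - f z₀ := ha.1
  have hb' : ψ b ^ m = f b - f z₀ := hb.1
  exact sub_left_inj.mp (ha'.symm.trans (hab.trans hb'))

/-- If `φ` is holomorphic near the closed unit disc and injective on `𝔻`, then every zero of
`φ'` on the boundary circle is simple: `φ'(z₀) = 0` with `|z₀| = 1` implies `φ''(z₀) ≠ 0`. -/
theorem stmt17 (φ : ℂ → ℂ) (V : Set ℂ) (hV : IsOpen V)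
    (hVD : closedBall (0 : ℂ) 1 ⊆ V) (hφ : DifferentiableOn ℂ φ V)
    (hinj : Set.InjOn φ (ball (0 : ℂ) 1)) (z₀ : ℂ) (hz₀ : z₀ ∈ sphere (0 : ℂ) 1)
    (hd : deriv φ z₀ = 0) :
    deriv (deriv φ) z₀ ≠ 0 := by
  intro hd2
  have hφz₀ : AnalyticAt ℂ φ z₀ :=
    hφ.analyticAt (hV.mem_nhds (hVD (sphere_subset_closedBall hz₀)))
  have hderiv : deriv (φ · - φ z₀) = deriv φ := funext fun z => deriv_sub_const _
  have h3 : ((3 : ℕ) : ℕ∞) ≤ analyticOrderAt (φ · - φ z₀) z₀ := by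
    rw [natCast_le_analyticOrderAt_iff_iteratedDeriv_eq_zero (hφz₀.fun_sub analyticAt_const)]
    intro i hi
    interval_cases i <;> simp [iteratedDeriv_succ, hderiv, hd, hd2]
  have h2 := analyticOrderAt_sub_le_two_of_injOn_ball hφz₀ (mem_sphere_zero_iff_norm.mp hz₀) hinj
  exact absurd (h3.trans h2) (by decide)
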